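/- arXiv:2011.01540 — 7 statements merged into one kernel-verified Lean document; each statement's English description precedes it below -/
import Mathlib

section
/- Structure-preserving Galerkin ROM conserves the Hamiltonian: Let N, r ∈ ℕ, let V ∈ Matrix (Fin N) (Fin r) ℝ, let z̄ ∈ ℝᴺ, let H : ℝᴺ → ℝ be differentiable with gradient ∇H, and let J : ℝᴺ → Matrix (Fin N) (Fin N) ℝ assign to each state a skew-symmetric matrix. Suppose z_r : ℝ → ℝʳ is differentiable and satisfies the reduced skew-gradient system z_r'(t) = (Vᵀ ⬝ J(ẑ t) ⬝ V).mulVec (Vᵀ.mulVec (∇H (ẑ t))) for all t, where ẑ t = z̄ + V.mulVec (z_r t). Then the Hamiltonian evaluated at the reduced approximation is constant: H (ẑ t) = H (ẑ 0) for all t. -/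
/-!
Along `ẑ = z̄ + V z_r` the chain rule gives
`d/dt H(ẑ) = ⟪∇H, V (Vᵀ J V) (Vᵀ ∇H)⟫ = ⟪Vᵀ ∇H, (Vᵀ J V) (Vᵀ ∇H)⟫`,
a quadratic form of the skew-symmetric matrix `Vᵀ J V`, hence zero; so `H ∘ ẑ` is constant.
-/

open Matrix

namespace Matrix

variable {m n R : Type*} [Fintype n] [CommRing R]

theorem dotProduct_mulVec_self_eq_zero_of_transpose_eq_neg [IsAddTorsionFree R]
    {A : Matrix n n R} (hA : Aᵀ = -A) (u : n → R) : u ⬝ᵥ A *ᵥ u = 0 :=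
  self_eq_neg.mp <| calc
    u ⬝ᵥ A *ᵥ u = Aᵀ *ᵥ u ⬝ᵥ u := by rw [dotProduct_mulVec, mulVec_transpose]
    _ = -(u ⬝ᵥ A *ᵥ u) := by rw [hA, neg_mulVec, neg_dotProduct, dotProduct_comm]

theorem transpose_mul_mul_self_eq_neg {A : Matrix n n R} (hA : Aᵀ = -A) (V : Matrix n m R) :
    (Vᵀ * A * V)ᵀ = -(Vᵀ * A * V) := by
  rw [transpose_mul, transpose_mul, transpose_transpose, hA, Matrix.neg_mul, Matrix.mul_neg,
    Matrix.mul_assoc]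

theorem dotProduct_mulVec_galerkin_eq_zero [Fintype m] [IsAddTorsionFree R] {A : Matrix n n R}
    (hA : Aᵀ = -A) (V : Matrix n m R) (g : n → R) :
    g ⬝ᵥ V *ᵥ ((Vᵀ * A * V) *ᵥ (Vᵀ *ᵥ g)) = 0 := by
  rw [dotProduct_mulVec, ← mulVec_transpose]
  exact dotProduct_mulVec_self_eq_zero_of_transpose_eq_neg
    (transpose_mul_mul_self_eq_neg hA V) _

end Matrix

theorem is_const_comp_of_inner_gradient_eq_zero {E : Type*} [NormedAddCommGroup E]
    [InnerProductSpace ℝ E] [CompleteSpace E] {H : E → ℝ} {gradH : E → E}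
    (hH : ∀ w, HasGradientAt H (gradH w) w) {z v : ℝ → E} (hz : ∀ t, HasDerivAt z (v t) t)
    (horth : ∀ t, inner ℝ (gradH (z t)) (v t) = 0) (t s : ℝ) : H (z t) = H (z s) := by
  have hderiv : ∀ t, HasDerivAt (H ∘ z) 0 t := fun t => by
    simpa [horth t] using (hH (z t)).hasFDerivAt.comp_hasDerivAt t (hz t)
  exact is_const_of_deriv_eq_zero (fun t => (hderiv t).differentiableAt)
    (fun t => (hderiv t).deriv) t s

/-- The structure-preserving Galerkin ROM
`z_r' = (Vᵀ J(ẑ) V) (Vᵀ ∇H(ẑ))`, with `ẑ = z̄ + V z_r` and `J(w)` skew-symmetric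
for all `w`, conserves the Hamiltonian along the reduced approximation:
`H (ẑ t) = H (ẑ 0)` for all `t`. -/
theorem rom_energy_conservation
    (N r : ℕ)
    (V : Matrix (Fin N) (Fin r) ℝ)
    (zbar : EuclideanSpace ℝ (Fin N))
    (H : EuclideanSpace ℝ (Fin N) → ℝ)
    (gradH : EuclideanSpace ℝ (Fin N) → EuclideanSpace ℝ (Fin N))
    (hH : ∀ w, HasGradientAt H (gradH w) w)
    (J : EuclideanSpace ℝ (Fin N) → Matrix (Fin N) (Fin N) ℝ)
    (hJ : ∀ w, (J w)ᵀ = -(J w))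
    (zr : ℝ → EuclideanSpace ℝ (Fin r))
    (zhat : ℝ → EuclideanSpace ℝ (Fin N))
    (hzhat : ∀ t : ℝ, zhat t = fun i => zbar i + V.mulVec (zr t) i)
    (hzr : ∀ t : ℝ, HasDerivAt zr
      (WithLp.toLp 2 ((Vᵀ * J (zhat t) * V).mulVec (Vᵀ.mulVec (gradH (zhat t))))) t) :
    ∀ t : ℝ, H (zhat t) = H (zhat 0) := by
  let T := (toLpLin 2 2 V).toContinuousLinearMap
  have hzhat_affine : ∀ s, zhat s = zbar + T (zr s) := fun s => WithLp.ofLp_injective 2 (hzhat s)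
  have hzhat_deriv : ∀ t, HasDerivAt zhat (T (WithLp.toLp 2
      ((Vᵀ * J (zhat t) * V) *ᵥ (Vᵀ *ᵥ gradH (zhat t))))) t := fun t =>
    ((T.hasFDerivAt.comp_hasDerivAt t (hzr t)).const_add zbar).congr_of_eventuallyEq
      (.of_forall hzhat_affine)
  refine fun t => is_const_comp_of_inner_gradient_eq_zero hH hzhat_deriv (fun t => ?_) t 0
  rw [EuclideanSpace.inner_eq_star_dotProduct, dotProduct_comm]
  exact dotProduct_mulVec_galerkin_eq_zero (hJ _) V _
end

section
/- The AVF method preserves quadratic Casimirs: Let n ∈ ℕ, let H : ℝⁿ → ℝ be continuously differentiable with gradient ∇H, let J : ℝⁿ → Matrix (Fin n) (Fin n) ℝ assign to each state a skew-symmetric matrix, and let Δt ∈ ℝ. Let A ∈ Matrix (Fin n) (Fin n) ℝ be symmetric, b ∈ ℝⁿ, and define C(z) = (1/2)·⟨z, A.mulVec z⟩ + ⟨b, z⟩. Assume C is a Casimir: (J w).mulVec (A.mulVec w + b) = 0 for all w ∈ ℝⁿ. If z⁰, z¹ ∈ ℝⁿ satisfy the AVF step z¹ = z⁰ + Δt ·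 (J((z⁰ + z¹)/2)).mulVec (∫₀¹ ∇H(z⁰ + ξ·(z¹ − z⁰)) dξ), then C(z¹) = C(z⁰). -/
/-!
On the midpoint of `z⁰` and `z¹` the gradient of a quadratic function is an exact discrete
gradient: `C z¹ - C z⁰ = ∇C((z⁰ + z¹)/2) ⬝ (z¹ - z⁰)`. The AVF increment `z¹ - z⁰` is
`Δt · J(m) g` with `m` that same midpoint, and `∇C(m) ⬝ J(m) g = -(J(m) ∇C(m)) ⬝ g = 0` by
skew-symmetry of `J(m)` and the Casimir property.
-/

open Matrix

namespace Matrix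

variable {ι R : Type*} [Fintype ι]

theorem IsSymm.mulVec_dotProduct_sub [CommRing R] {A : Matrix ι ι R} (hA : A.IsSymm)
    (x y : ι → R) : A *ᵥ x ⬝ᵥ x - A *ᵥ y ⬝ᵥ y = A *ᵥ (x + y) ⬝ᵥ (x - y) := by
  have hcomm : A *ᵥ y ⬝ᵥ x = A *ᵥ x ⬝ᵥ y := by
    rw [dotProduct_comm, dotProduct_mulVec, ← mulVec_transpose, hA.eq]
  rw [mulVec_add, add_dotProduct, dotProduct_sub, dotProduct_sub, hcomm]
  ring

theorem IsSymm.quadratic_sub_eq_midpoint_gradient_dotProduct [Field R] {A : Matrix ι ι R}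
    (hA : A.IsSymm) (b x y : ι → R) :
    (2⁻¹ * (A *ᵥ x ⬝ᵥ x) + x ⬝ᵥ b) - (2⁻¹ * (A *ᵥ y ⬝ᵥ y) + y ⬝ᵥ b)
      = (A *ᵥ ((2⁻¹ : R) • (x + y)) + b) ⬝ᵥ (x - y) := by
  have hquad := hA.mulVec_dotProduct_sub x y
  rw [mulVec_smul, add_dotProduct, smul_dotProduct, ← hquad, dotProduct_comm b, sub_dotProduct,
    smul_eq_mul]
  ring

theorem dotProduct_mulVec_eq_zero_of_transpose_eq_neg [CommRing R] {J : Matrix ι ι R}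
    (hJ : Jᵀ = -J) {v : ι → R} (hv : J *ᵥ v = 0) (w : ι → R) : v ⬝ᵥ J *ᵥ w = 0 := by
  rw [dotProduct_mulVec, ← mulVec_transpose, hJ, neg_mulVec, hv, neg_zero, zero_dotProduct]

end Matrix

theorem avf_quadratic_casimir_conservation_general
    (n : ℕ)
    (gradH : EuclideanSpace ℝ (Fin n) → EuclideanSpace ℝ (Fin n))
    (J : EuclideanSpace ℝ (Fin n) → Matrix (Fin n) (Fin n) ℝ)
    (hJ : ∀ w, (J w)ᵀ = -(J w))
    (Δt : ℝ)
    (A : Matrix (Fin n) (Fin n) ℝ)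
    (hA : Aᵀ = A)
    (b : EuclideanSpace ℝ (Fin n))
    (C : EuclideanSpace ℝ (Fin n) → ℝ)
    (hC : ∀ z : EuclideanSpace ℝ (Fin n),
      C z = (1/2) * inner ℝ z (WithLp.toLp 2 (A.mulVec z : Fin n → ℝ) : EuclideanSpace ℝ (Fin n))
        + inner ℝ b z)
    (hCasimir : ∀ w : EuclideanSpace ℝ (Fin n),
      (J w).mulVec ((fun i => A.mulVec w i + b i) : Fin n → ℝ) = 0)
    (z0 z1 : EuclideanSpace ℝ (Fin n))
    (hstep : z1 = fun i => z0 i + Δt *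
      (J ((2:ℝ)⁻¹ • (z0 + z1))).mulVec
        (∫ ξ in (0:ℝ)..1, gradH (z0 + ξ • (z1 - z0))) i) :
    C z1 = C z0 := by
  set m := (2:ℝ)⁻¹ • (z0 + z1)
  set g := ∫ ξ in (0:ℝ)..1, (gradH (z0 + ξ • (z1 - z0))).ofLp
  have hC_dotProduct : ∀ z, C z = 2⁻¹ * (A *ᵥ z.ofLp ⬝ᵥ z.ofLp) + z.ofLp ⬝ᵥ b.ofLp := fun z => by
    simp [hC, EuclideanSpace.inner_eq_star_dotProduct]
  have hincrement : z1.ofLp - z0.ofLp = Δt • J m *ᵥ g := by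
    rw [hstep]
    ext i
    simp
  have hmidpoint : (2⁻¹ : ℝ) • (z1.ofLp + z0.ofLp) = m.ofLp := by
    simp [m, add_comm]
  rw [← sub_eq_zero, hC_dotProduct, hC_dotProduct, IsSymm.quadratic_sub_eq_midpoint_gradient_dotProduct hA, hmidpoint,
    hincrement, dotProduct_smul]
  exact smul_eq_zero_of_right Δt
    (dotProduct_mulVec_eq_zero_of_transpose_eq_neg (hJ m) (hCasimir m) g)

/-- The AVF method preserves quadratic Casimirs: if
`C(z) = ½⟪z, A z⟫ + ⟪b, z⟫` with `A` symmetric and `J(w)(Aw + b) = 0` for all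
`w`, and `z¹ = z⁰ + Δt • J((z⁰+z¹)/2) ∫₀¹ ∇H(z⁰ + ξ(z¹-z⁰)) dξ` with `J(w)`
skew-symmetric, then `C z¹ = C z⁰`. -/
theorem avf_quadratic_casimir_conservation
    (n : ℕ)
    (H : EuclideanSpace ℝ (Fin n) → ℝ)
    (gradH : EuclideanSpace ℝ (Fin n) → EuclideanSpace ℝ (Fin n))
    (hH : ∀ w, HasGradientAt H (gradH w) w)
    (hHsmooth : ContDiff ℝ 1 H)
    (J : EuclideanSpace ℝ (Fin n) → Matrix (Fin n) (Fin n) ℝ)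
    (hJ : ∀ w, (J w)ᵀ = -(J w))
    (Δt : ℝ)
    (A : Matrix (Fin n) (Fin n) ℝ)
    (hA : Aᵀ = A)
    (b : EuclideanSpace ℝ (Fin n))
    (C : EuclideanSpace ℝ (Fin n) → ℝ)
    (hC : ∀ z : EuclideanSpace ℝ (Fin n),
      C z = (1/2) * inner ℝ z (WithLp.toLp 2 (A.mulVec z : Fin n → ℝ) : EuclideanSpace ℝ (Fin n))
        + inner ℝ b z)
    (hCasimir : ∀ w : EuclideanSpace ℝ (Fin n),
      (J w).mulVec ((fun i => A.mulVec w i + b i) : Fin n → ℝ) = 0)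
    (z0 z1 : EuclideanSpace ℝ (Fin n))
    (hstep : z1 = fun i => z0 i + Δt *
      (J ((2:ℝ)⁻¹ • (z0 + z1))).mulVec
        (∫ ξ in (0:ℝ)..1, gradH (z0 + ξ • (z1 - z0))) i) :
    C z1 = C z0 :=
  avf_quadratic_casimir_conservation_general n gradH J hJ Δt A hA b C hC hCasimir z0 z1 hstep
end

section
/- The AVF method preserves linear invariants: Let n ∈ ℕ, let f : ℝⁿ → ℝⁿ be continuous, let Δt ∈ ℝ, and let c ∈ ℝⁿ satisfy ⟨c, f(z)⟩ = 0 for all z ∈ ℝⁿ. If z⁰, z¹ ∈ ℝⁿ satisfy the general AVF step z¹ = z⁰ + Δt · ∫₀¹ f(z⁰ + ξ·(z¹ − z⁰)) dξ, then ⟨c, z¹⟩ = ⟨c, z⁰⟩. -/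
/-! A continuous linear functional commutes with the integral, so a functional that annihilates
the vector field annihilates its average along the segment from `z⁰` to `z¹`, hence also the
increment `z¹ - z⁰`. -/

open intervalIntegral

namespace ContinuousLinearMap

variable {E F : Type*} [NormedAddCommGroup E] [NormedSpace ℝ E] [CompleteSpace E]
  [NormedAddCommGroup F] [NormedSpace ℝ F] [CompleteSpace F]
  (L : E →L[ℝ] F) {g : ℝ → E} {μ : MeasureTheory.Measure ℝ} {a b : ℝ}

theorem map_intervalIntegral_eq_zero_of_forall (hL : ∀ x, L (g x) = 0) :
    L (∫ x in a..b, g x ∂μ) = 0 := by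
  by_cases hg : IntervalIntegrable g μ a b
  · simp [← L.intervalIntegral_comp_comm hg, hL]
  -- a non-integrable function has integral `0` by convention
  · rw [integral_undef hg, map_zero]

theorem map_eq_of_eq_add_smul_intervalIntegral {t : ℝ} {z0 z1 : E} (hL : ∀ x, L (g x) = 0)
    (hz : z1 = z0 + t • ∫ x in a..b, g x ∂μ) : L z1 = L z0 := by
  rw [hz, map_add, map_smul, L.map_intervalIntegral_eq_zero_of_forall hL, smul_zero, add_zero]

end ContinuousLinearMap

theorem avf_linear_invariant_general
    (n : ℕ)
    (f : EuclideanSpace ℝ (Fin n) → EuclideanSpace ℝ (Fin n))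
    (Δt : ℝ)
    (c : EuclideanSpace ℝ (Fin n))
    (hc : ∀ z : EuclideanSpace ℝ (Fin n), (inner ℝ c (f z) : ℝ) = 0)
    (z0 z1 : EuclideanSpace ℝ (Fin n))
    (hstep : z1 = z0 + Δt • ∫ ξ in (0:ℝ)..1, f (z0 + ξ • (z1 - z0))) :
    (inner ℝ c z1 : ℝ) = inner ℝ c z0 :=
  (innerSL ℝ c).map_eq_of_eq_add_smul_intervalIntegral (fun _ => hc _) hstep

/-- The AVF method preserves linear invariants: if `⟨c, f z⟩ = 0` for all `z`
and `z¹ = z⁰ + Δt • ∫₀¹ f(z⁰ + ξ(z¹-z⁰)) dξ`, then `⟨c, z¹⟩ = ⟨c, z⁰⟩`. -/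
theorem avf_linear_invariant
    (n : ℕ)
    (f : EuclideanSpace ℝ (Fin n) → EuclideanSpace ℝ (Fin n))
    (hf : Continuous f)
    (Δt : ℝ)
    (c : EuclideanSpace ℝ (Fin n))
    (hc : ∀ z : EuclideanSpace ℝ (Fin n), (inner ℝ c (f z) : ℝ) = 0)
    (z0 z1 : EuclideanSpace ℝ (Fin n))
    (hstep : z1 = z0 + Δt • ∫ ξ in (0:ℝ)..1, f (z0 + ξ • (z1 - z0))) :
    (inner ℝ c z1 : ℝ) = inner ℝ c z0 :=
  avf_linear_invariant_general n f Δt c hc z0 z1 hstep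
end

section
/- The AVF method is invariant with respect to linear transformations: Let n ∈ ℕ, let f : ℝⁿ → ℝⁿ be continuous, let Δt ∈ ℝ, and let A ∈ Matrix (Fin n) (Fin n) ℝ be invertible. Define the transformed vector field g(w) = A.mulVec (f (A⁻¹.mulVec w)). If z⁰, z¹ ∈ ℝⁿ satisfy the AVF step z¹ = z⁰ + Δt · ∫₀¹ f(z⁰ + ξ·(z¹ − z⁰)) dξ, then the transformed states w⁰ = A.mulVec z⁰ and w¹ = A.mulVec z¹ satisfy the AVF step for g: w¹ = w⁰ + Δt · ∫₀¹ g(w⁰ + ξ·(w¹ − w⁰)) dξ. -/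
open Matrix intervalIntegral

/-! Everything in an AVF step is linear in the state except `f`, and a continuous linear
equivalence commutes with the interval integral (it also preserves non-integrability, so the
junk value `0` is matched on both sides). Hence the change of variables `w = A z` carries AVF
steps for `f` to AVF steps for `A ∘ f ∘ A⁻¹`. -/

theorem ContinuousLinearEquiv.intervalIntegral_comp_comm {𝕜 E F : Type*} [RCLike 𝕜]
    [NormedAddCommGroup E] [NormedSpace 𝕜 E] [NormedSpace ℝ E]
    [NormedAddCommGroup F] [NormedSpace 𝕜 F] [NormedSpace ℝ F]
    (L : E ≃L[𝕜] F) (φ : ℝ → E) (a b : ℝ) (μ : MeasureTheory.Measure ℝ) :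
    ∫ x in a..b, L (φ x) ∂μ = L (∫ x in a..b, φ x ∂μ) := by
  simp only [intervalIntegral, L.integral_comp_comm, map_sub]

section AVF

variable {E F : Type*} [NormedAddCommGroup E] [NormedSpace ℝ E]
  [NormedAddCommGroup F] [NormedSpace ℝ F]

def IsAVFStep (f : E → E) (Δt : ℝ) (z0 z1 : E) : Prop :=
  z1 = z0 + Δt • ∫ ξ in (0:ℝ)..1, f (z0 + ξ • (z1 - z0))

theorem IsAVFStep.map_continuousLinearEquiv {f : E → E} {Δt : ℝ} {z0 z1 : E}
    (h : IsAVFStep f Δt z0 z1) (e : E ≃L[ℝ] F) :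
    IsAVFStep (fun w => e (f (e.symm w))) Δt (e z0) (e z1) := by
  have integrand (ξ : ℝ) :
      e (f (e.symm (e z0 + ξ • (e z1 - e z0)))) = e (f (z0 + ξ • (z1 - z0))) := by
    rw [← map_sub, ← map_smul, ← map_add, e.symm_apply_apply]
  unfold IsAVFStep
  simp only [integrand, e.intervalIntegral_comp_comm, ← map_smul, ← map_add]
  exact congrArg e h

end AVF

noncomputable def Matrix.toEuclideanCLE {𝕜 n : Type*} [RCLike 𝕜] [Fintype n] [DecidableEq n]
    (A : Matrix n n 𝕜) (hA : IsUnit A) : EuclideanSpace 𝕜 n ≃L[𝕜] EuclideanSpace 𝕜 n :=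
  have hdet : IsUnit A.det := (isUnit_iff_isUnit_det A).mp hA
  ContinuousLinearEquiv.equivOfInverse (toEuclideanCLM (𝕜 := 𝕜) A) (toEuclideanCLM (𝕜 := 𝕜) A⁻¹)
    (fun x => by
      rw [← mul_apply_eq_comp, ← map_mul, nonsing_inv_mul A hdet, map_one, one_apply_eq_self])
    (fun x => by
      rw [← mul_apply_eq_comp, ← map_mul, mul_nonsing_inv A hdet, map_one, one_apply_eq_self])

theorem avf_linear_invariance_general
    (n : ℕ)
    (f : EuclideanSpace ℝ (Fin n) → EuclideanSpace ℝ (Fin n))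
    (Δt : ℝ)
    (A : Matrix (Fin n) (Fin n) ℝ)
    (hA : IsUnit A)
    (g : EuclideanSpace ℝ (Fin n) → EuclideanSpace ℝ (Fin n))
    (hg : ∀ w : EuclideanSpace ℝ (Fin n),
      g w = A.mulVec (f (WithLp.toLp 2 (A⁻¹.mulVec w))))
    (z0 z1 : EuclideanSpace ℝ (Fin n))
    (hstep : z1 = z0 + Δt • ∫ ξ in (0:ℝ)..1, f (z0 + ξ • (z1 - z0)))
    (w0 w1 : EuclideanSpace ℝ (Fin n))
    (hw0 : w0 = A.mulVec z0) (hw1 : w1 = A.mulVec z1) :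
    w1 = w0 + Δt • ∫ ξ in (0:ℝ)..1, g (w0 + ξ • (w1 - w0)) := by
  set e := A.toEuclideanCLE hA
  have hg_eq : g = fun w => e (f (e.symm w)) := funext fun w => WithLp.ofLp_injective 2 (hg w)
  have hw0_eq : w0 = e z0 := WithLp.ofLp_injective 2 hw0
  have hw1_eq : w1 = e z1 := WithLp.ofLp_injective 2 hw1
  rw [hg_eq, hw0_eq, hw1_eq]
  exact IsAVFStep.map_continuousLinearEquiv hstep e

/-- The AVF method is invariant with respect to invertible linear
transformations: if `z¹ = z⁰ + Δt • ∫₀¹ f(z⁰ + ξ(z¹-z⁰)) dξ` and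
`g(w) = A f(A⁻¹ w)`, then `w⁰ = A z⁰`, `w¹ = A z¹` satisfy
`w¹ = w⁰ + Δt • ∫₀¹ g(w⁰ + ξ(w¹-w⁰)) dξ`. -/
theorem avf_linear_invariance
    (n : ℕ)
    (f : EuclideanSpace ℝ (Fin n) → EuclideanSpace ℝ (Fin n))
    (hf : Continuous f)
    (Δt : ℝ)
    (A : Matrix (Fin n) (Fin n) ℝ)
    (hA : IsUnit A)
    (g : EuclideanSpace ℝ (Fin n) → EuclideanSpace ℝ (Fin n))
    (hg : ∀ w : EuclideanSpace ℝ (Fin n),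
      g w = A.mulVec (f (WithLp.toLp 2 (A⁻¹.mulVec w))))
    (z0 z1 : EuclideanSpace ℝ (Fin n))
    (hstep : z1 = z0 + Δt • ∫ ξ in (0:ℝ)..1, f (z0 + ξ • (z1 - z0)))
    (w0 w1 : EuclideanSpace ℝ (Fin n))
    (hw0 : w0 = A.mulVec z0) (hw1 : w1 = A.mulVec z1) :
    w1 = w0 + Δt • ∫ ξ in (0:ℝ)..1, g (w0 + ξ • (w1 - w0)) :=
  avf_linear_invariance_general n f Δt A hA g hg z0 z1 hstep w0 w1 hw0 hw1
end

section
/- Skew-symmetry of the DEIM-reduced Poisson matrix: Let N, r ∈ ℕ, let D_x, D_y ∈ Matrix (Fin N) (Fin N) ℝ be skew-symmetric, let V_h, V_u, V_v, V_s ∈ Matrix (Fin N) (Fin r) ℝ, and let f₁, f₂, f₃ ∈ ℝᴺ. Then the 4r×4r block matrix J̃_r = [[0, −V_hᵀD_xV_u, −V_hᵀD_yV_v, 0], [−V_uᵀD_xV_h, 0, V_uᵀ diag(f₁) V_v, V_uᵀ diag(f₂) V_s], [−V_vᵀD_yV_h, −V_vᵀ diag(f₁) V_u, 0, V_vᵀ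 diag(f₃) V_s], [0, −V_sᵀ diag(f₂) V_u, −V_sᵀ diag(f₃) V_v, 0]] is skew-symmetric, i.e. J̃_rᵀ = −J̃_r. -/
open Matrix

namespace Matrix

variable {α : Type*}

theorem fromBlocks_transpose_eq_neg_fromBlocks [AddGroup α] {l m n o : Type*}
    {A : Matrix n l α} {B : Matrix n m α} {C : Matrix o l α} {D : Matrix o m α}
    {A' : Matrix l n α} {B' : Matrix l o α} {C' : Matrix m n α} {D' : Matrix m o α}
    (hA : Aᵀ = -A') (hB : Bᵀ = -C') (hC : Cᵀ = -B') (hD : Dᵀ = -D') :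
    (fromBlocks A B C D)ᵀ = -fromBlocks A' B' C' D' := by
  rw [fromBlocks_transpose, fromBlocks_neg, hA, hB, hC, hD]

variable [CommRing α] {m n : Type*} [Fintype m]

theorem transpose_transpose_mul_mul_of_transpose_eq_neg {D : Matrix m m α} (hD : Dᵀ = -D)
    (A B : Matrix m n α) : (Aᵀ * D * B)ᵀ = -(Bᵀ * D * A) := by
  rw [transpose_mul, transpose_mul, transpose_transpose, hD, Matrix.neg_mul, Matrix.mul_neg,
    Matrix.mul_assoc]

theorem transpose_transpose_mul_diagonal_mul [DecidableEq m] (f : m → α) (A B : Matrix m n α) :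
    (Aᵀ * diagonal f * B)ᵀ = Bᵀ * diagonal f * A := by
  rw [transpose_mul, transpose_mul, transpose_transpose, diagonal_transpose, Matrix.mul_assoc]

end Matrix

/-- Skew-symmetry of the DEIM-reduced Poisson matrix of the RTSWE: for
skew-symmetric `D_x, D_y`, arbitrary POD basis matrices `V_h, V_u, V_v, V_s`
and arbitrary DEIM vectors `f₁, f₂, f₃`, the reduced block matrix is
skew-symmetric. -/
theorem rtswe_deim_reduced_poisson_matrix_skew_symmetric
    (N r : ℕ)
    (Dx Dy : Matrix (Fin N) (Fin N) ℝ)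
    (hDx : Dxᵀ = -Dx) (hDy : Dyᵀ = -Dy)
    (Vh Vu Vv Vs : Matrix (Fin N) (Fin r) ℝ)
    (f₁ f₂ f₃ : Fin N → ℝ)
    (Jr : Matrix ((Fin r ⊕ Fin r) ⊕ (Fin r ⊕ Fin r))
               ((Fin r ⊕ Fin r) ⊕ (Fin r ⊕ Fin r)) ℝ)
    (hJr : Jr = fromBlocks
      (fromBlocks 0 (-(Vhᵀ * Dx * Vu)) (-(Vuᵀ * Dx * Vh)) 0)
      (fromBlocks (-(Vhᵀ * Dy * Vv)) 0 (Vuᵀ * diagonal f₁ * Vv) (Vuᵀ * diagonal f₂ * Vs))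
      (fromBlocks (-(Vvᵀ * Dy * Vh)) (-(Vvᵀ * diagonal f₁ * Vu)) 0 (-(Vsᵀ * diagonal f₂ * Vu)))
      (fromBlocks 0 (Vvᵀ * diagonal f₃ * Vs) (-(Vsᵀ * diagonal f₃ * Vv)) 0)) :
    Jrᵀ = -Jr := by
  subst hJr
  repeat' apply fromBlocks_transpose_eq_neg_fromBlocks
  all_goals
    simp only [transpose_neg, transpose_zero, neg_zero, neg_neg,
      transpose_transpose_mul_mul_of_transpose_eq_neg hDx,
      transpose_transpose_mul_mul_of_transpose_eq_neg hDy, transpose_transpose_mul_diagonal_mul]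
end

section
/- POD optimality (Schmidt–Eckart–Young for the Frobenius norm with orthonormal projections): Let N, K, r ∈ ℕ with r ≤ K ≤ N, and let S ∈ Matrix (Fin N) (Fin K) ℝ with singular values σ₁ ≥ σ₂ ≥ … ≥ σ_K ≥ 0 (the square roots of the eigenvalues of SᵀS arranged in decreasing order). Then for every V ∈ Matrix (Fin N) (Fin r) ℝ with orthonormal columns (VᵀV = 1), one has ‖S − V ⬝ Vᵀ ⬝ S‖_F² ≥ Σ_{j=r+1}^{K} σⱼ², and this lower bound is attained when the columns of V are the r left singular vectors of S corresponding to the r largest singular values. -/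
/-!
Rotating by `U`, the columns `y j` of `Y = S U` are orthogonal with `‖y j‖² = σ j ²`, and
`‖S - V Vᵀ S‖² = ‖S‖² - ‖Vᵀ S‖² = ∑ σ j ² - ∑ q j` with `q j = ‖Vᵀ y j‖²`. Bessel's inequality
for the columns of `V` gives `q j ≤ σ j ²`, and for the orthonormal family `y j / σ j` it gives
`∑ q j / σ j ² ≤ ‖V‖² = r`. Maximising `∑ σ j ² a j` over weights `0 ≤ a j ≤ 1` of total mass
at most `r` puts full weight on the `r` largest `σ j ²`. For eigenvectors of `S Sᵀ`,
`‖Vᵀ S‖² = tr (Vᵀ S Sᵀ V)` is the sum of the eigenvalues, so the bound is attained.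
-/

open Matrix Finset

lemma Fin.sum_castLE_eq_sum_filter_val_lt {K r : ℕ} (h : r ≤ K) (f : Fin K → ℝ) :
    ∑ i : Fin r, f (Fin.castLE h i) = ∑ j ∈ univ.filter (fun j : Fin K => (j : ℕ) < r), f j := by
  have himage : univ.filter (fun j : Fin K => (j : ℕ) < r) = univ.map (Fin.castLEEmb h) := by
    ext j
    simp only [mem_filter, mem_univ, true_and, mem_map]
    exact ⟨fun hj => ⟨⟨j, hj⟩, rfl⟩, by rintro ⟨i, _, rfl⟩; exact i.isLt⟩
  rw [himage, sum_map]
  rfl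

lemma sum_mul_le_sum_of_threshold {ι : Type*} [Fintype ι] [DecidableEq ι] (s : Finset ι)
    {a b : ι → ℝ} {c : ℝ} (hc : 0 ≤ c) (hs : ∀ j ∈ s, c ≤ b j) (hsc : ∀ j ∉ s, b j ≤ c)
    (ha0 : ∀ j, 0 ≤ a j) (ha1 : ∀ j, a j ≤ 1) (hsum : ∑ j, a j ≤ #s) :
    ∑ j, b j * a j ≤ ∑ j ∈ s, b j := by
  have hin : ∑ j ∈ s, (b j - c) * a j ≤ ∑ j ∈ s, (b j - c) :=
    sum_le_sum fun j hj => mul_le_of_le_one_right (sub_nonneg.2 (hs j hj)) (ha1 j)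
  have hout : ∑ j ∈ sᶜ, (b j - c) * a j ≤ 0 :=
    sum_nonpos fun j hj => mul_nonpos_of_nonpos_of_nonneg
      (sub_nonpos.2 (hsc j (mem_compl.1 hj))) (ha0 j)
  calc ∑ j, b j * a j = ∑ j ∈ s, (b j - c) * a j + ∑ j ∈ sᶜ, (b j - c) * a j + c * ∑ j, a j := by
        rw [sum_add_sum_compl, mul_sum, ← sum_add_distrib]
        exact sum_congr rfl fun j _ => by ring
    _ ≤ ∑ j ∈ s, (b j - c) + c * #s := by gcongr; linarith
    _ = ∑ j ∈ s, b j := by rw [sum_sub_distrib, sum_const, nsmul_eq_mul]; ring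

lemma sum_mul_le_sum_filter_val_lt_of_antitone {K r : ℕ} (hrK : r ≤ K) {a b : Fin K → ℝ}
    (hb : Antitone b) (hb0 : ∀ j, 0 ≤ b j) (ha0 : ∀ j, 0 ≤ a j) (ha1 : ∀ j, a j ≤ 1)
    (hsum : ∑ j, a j ≤ r) :
    ∑ j, b j * a j ≤ ∑ j ∈ univ.filter (fun j : Fin K => (j : ℕ) < r), b j := by
  have hcard : #(univ.filter (fun j : Fin K => (j : ℕ) < r)) = r := by
    rw [Fin.card_filter_val_lt]; omega
  rcases hrK.lt_or_eq with hr | rfl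
  · refine sum_mul_le_sum_of_threshold _ (c := b ⟨r, hr⟩) (hb0 _) (fun j hj => hb ?_)
      (fun j hj => hb ?_) ha0 ha1 (by rwa [hcard])
    · simp only [mem_filter, mem_univ, true_and] at hj; exact Fin.mk_le_of_le_val hj.le
    · simp only [mem_filter, mem_univ, true_and, not_lt] at hj; exact hj
  · refine sum_mul_le_sum_of_threshold _ le_rfl (fun j _ => hb0 j) (fun j hj => ?_) ha0 ha1
      (by rwa [hcard])
    simp at hj

lemma transpose_mul_self_apply_self {m n : Type*} [Fintype m] (B : Matrix m n ℝ) (j : n) :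
    (Bᵀ * B) j j = ∑ i, B i j ^ 2 := by
  simp [mul_apply, sq]

section
variable {m n p : Type*} [Fintype m] [Fintype n]

lemma sum_sq_eq_trace_transpose_mul (B : Matrix m n ℝ) :
    ∑ i, ∑ j, B i j ^ 2 = trace (Bᵀ * B) := by
  simp only [trace, Matrix.diag, transpose_mul_self_apply_self]
  exact Finset.sum_comm

lemma sum_sq_mul_of_mul_transpose_eq_one [DecidableEq n] {U : Matrix n n ℝ} (hU : U * Uᵀ = 1)
    (A : Matrix m n ℝ) : ∑ i, ∑ j, (A * U) i j ^ 2 = ∑ i, ∑ j, A i j ^ 2 := by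
  rw [sum_sq_eq_trace_transpose_mul, sum_sq_eq_trace_transpose_mul, trace_mul_comm,
    trace_mul_comm Aᵀ, transpose_mul, Matrix.mul_assoc, ← Matrix.mul_assoc U, hU,
    Matrix.one_mul]

lemma transpose_mul_self_sub_mul_transpose_mul {W : Matrix m n ℝ} (hW : W * Wᵀ * W = W)
    (A : Matrix m p ℝ) :
    (A - W * Wᵀ * A)ᵀ * (A - W * Wᵀ * A) = Aᵀ * A - (Wᵀ * A)ᵀ * (Wᵀ * A) := by
  have hW' : Aᵀ * (W * (Wᵀ * (W * (Wᵀ * A)))) = Aᵀ * (W * (Wᵀ * A)) := by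
    simp only [← Matrix.mul_assoc, hW]
  simp only [transpose_sub, transpose_mul, transpose_transpose, Matrix.sub_mul, Matrix.mul_sub,
    Matrix.mul_assoc, hW']
  abel

lemma sum_sq_sub_mul_transpose_mul [Fintype p] {W : Matrix m n ℝ} (hW : W * Wᵀ * W = W)
    (A : Matrix m p ℝ) :
    ∑ i, ∑ j, (A - W * Wᵀ * A) i j ^ 2 = ∑ i, ∑ j, A i j ^ 2 - ∑ i, ∑ j, (Wᵀ * A) i j ^ 2 := by
  simp only [sum_sq_eq_trace_transpose_mul, transpose_mul_self_sub_mul_transpose_mul hW, trace_sub]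

lemma sum_sq_transpose_mul_le [Fintype p] {W : Matrix m n ℝ} (hW : W * Wᵀ * W = W)
    (A : Matrix m p ℝ) : ∑ i, ∑ j, (Wᵀ * A) i j ^ 2 ≤ ∑ i, ∑ j, A i j ^ 2 := by
  have h := sum_sq_sub_mul_transpose_mul hW A
  have : 0 ≤ ∑ i, ∑ j, (A - W * Wᵀ * A) i j ^ 2 := by positivity
  linarith

lemma sum_sq_transpose_mul_apply_le {W : Matrix m n ℝ} (hW : W * Wᵀ * W = W)
    (A : Matrix m p ℝ) (j : p) : ∑ i, (Wᵀ * A) i j ^ 2 ≤ ∑ i, A i j ^ 2 := by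
  have h := congrFun (congrFun (transpose_mul_self_sub_mul_transpose_mul hW A) j) j
  simp only [Matrix.sub_apply, transpose_mul_self_apply_self] at h
  linarith [show 0 ≤ ∑ i, (A i j - (W * Wᵀ * A) i j) ^ 2 by positivity]

/-- `Y * diagonal σ⁻¹` is a partial isometry also when `σ` has zeros, thanks to `0⁻¹ = 0`. -/
lemma mul_diagonal_inv_mul_transpose_mul_self [DecidableEq n] {Y : Matrix m n ℝ} {σ : n → ℝ}
    (hY : Yᵀ * Y = diagonal (fun j => σ j ^ 2)) :
    Y * diagonal σ⁻¹ * (Y * diagonal σ⁻¹)ᵀ * (Y * diagonal σ⁻¹) = Y * diagonal σ⁻¹ := by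
  simp only [transpose_mul, diagonal_transpose, Matrix.mul_assoc]
  rw [← Matrix.mul_assoc Yᵀ, hY]
  simp only [diagonal_mul_diagonal]
  congr 2
  funext j
  rcases eq_or_ne (σ j) 0 with h | h
  · simp [h]
  · simp only [Pi.inv_apply]; field_simp

lemma sum_sq_transpose_mul_eq_sum_of_eigenvectors [Fintype p] [DecidableEq p]
    {A : Matrix m n ℝ} {V : Matrix m p ℝ} (hV : Vᵀ * V = 1) {μ : p → ℝ}
    (hμ : ∀ i, (A * Aᵀ) *ᵥ (fun k => V k i) = μ i • (fun k => V k i)) :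
    ∑ i, ∑ j, (Vᵀ * A) i j ^ 2 = ∑ i, μ i := by
  have hAV : A * Aᵀ * V = V * diagonal μ := by
    ext k i
    rw [mul_diagonal, mul_apply, mul_comm]
    exact congrFun (hμ i) k
  rw [sum_sq_eq_trace_transpose_mul, trace_mul_comm, transpose_mul, transpose_transpose,
    Matrix.mul_assoc, ← Matrix.mul_assoc A, hAV, ← Matrix.mul_assoc, hV, Matrix.one_mul,
    trace_diagonal]

end

lemma sum_sq_transpose_mul_le_sum_filter_val_lt {m : Type*} [Fintype m] {K r : ℕ}
    (hrK : r ≤ K) {σ : Fin K → ℝ} (hσ0 : ∀ j, 0 ≤ σ j) (hσ : Antitone σ)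
    {Y : Matrix m (Fin K) ℝ} (hY : Yᵀ * Y = diagonal (fun j => σ j ^ 2))
    {V : Matrix m (Fin r) ℝ} (hV : Vᵀ * V = 1) :
    ∑ i, ∑ j, (Vᵀ * Y) i j ^ 2 ≤ ∑ j ∈ univ.filter (fun j : Fin K => (j : ℕ) < r), σ j ^ 2 := by
  set q : Fin K → ℝ := fun j => ∑ i, (Vᵀ * Y) i j ^ 2
  have hq0 : ∀ j, 0 ≤ q j := fun j => by positivity
  have hqσ : ∀ j, q j ≤ σ j ^ 2 := fun j => by
    have h := sum_sq_transpose_mul_apply_le (W := V)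
      (by rw [Matrix.mul_assoc, hV, Matrix.mul_one]) Y j
    rwa [← transpose_mul_self_apply_self Y, hY, diagonal_apply_eq] at h
  have hq : ∀ j, σ j ^ 2 * (q j / σ j ^ 2) = q j := fun j => by
    rcases eq_or_ne (σ j) 0 with h | h
    · have := hqσ j
      simp only [h] at this ⊢
      linarith [hq0 j]
    · field_simp
  have hsum : ∑ j, q j / σ j ^ 2 ≤ r := by
    have hW : (Y * diagonal σ⁻¹)ᵀ * V = diagonal σ⁻¹ * (Vᵀ * Y)ᵀ := by
      rw [transpose_mul, diagonal_transpose, transpose_mul, transpose_transpose, Matrix.mul_assoc]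
    have h := sum_sq_transpose_mul_le (mul_diagonal_inv_mul_transpose_mul_self hY) V
    rw [hW, sum_sq_eq_trace_transpose_mul V, hV, trace_one, Fintype.card_fin] at h
    convert h using 2 with j
    rw [sum_div]
    refine sum_congr rfl fun i _ => ?_
    rw [diagonal_mul, transpose_apply, Pi.inv_apply]
    ring
  calc ∑ i, ∑ j, (Vᵀ * Y) i j ^ 2 = ∑ j, σ j ^ 2 * (q j / σ j ^ 2) := by
        rw [sum_comm]; simp only [hq, q]
    _ ≤ _ := sum_mul_le_sum_filter_val_lt_of_antitone hrK
        (fun i j hij => pow_le_pow_left₀ (hσ0 j) (hσ hij) 2) (fun j => sq_nonneg _)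
        (fun j => div_nonneg (hq0 j) (sq_nonneg _))
        (fun j => div_le_one_of_le₀ (hqσ j) (sq_nonneg _)) hsum

theorem pod_optimality_general
    (N K r : ℕ) (hrK : r ≤ K)
    (S : Matrix (Fin N) (Fin K) ℝ)
    (σ : Fin K → ℝ)
    (hσ_nonneg : ∀ j, 0 ≤ σ j)
    (hσ_anti : Antitone σ)
    (hσ_sing : ∃ U : Matrix (Fin K) (Fin K) ℝ, Uᵀ * U = 1 ∧
      Sᵀ * S = U * diagonal (fun j => σ j ^ 2) * Uᵀ) :
    (∀ V : Matrix (Fin N) (Fin r) ℝ, Vᵀ * V = 1 →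
      (∑ j ∈ univ.filter (fun j : Fin K => r ≤ (j : ℕ)), σ j ^ 2) ≤
        ∑ i, ∑ j, ((S - V * Vᵀ * S) i j) ^ 2) ∧
    (∀ V : Matrix (Fin N) (Fin r) ℝ, Vᵀ * V = 1 →
      (∀ i : Fin r, (S * Sᵀ).mulVec (fun k => V k i) =
        σ (Fin.castLE hrK i) ^ 2 • (fun k => V k i)) →
      ∑ i, ∑ j, ((S - V * Vᵀ * S) i j) ^ 2 =
        ∑ j ∈ univ.filter (fun j : Fin K => r ≤ (j : ℕ)), σ j ^ 2) := by
  obtain ⟨U, hU, hS⟩ := hσ_sing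
  have hUU : U * Uᵀ = 1 := mul_eq_one_comm.mp hU
  have hSU : (S * U)ᵀ * (S * U) = diagonal (fun j => σ j ^ 2) := by
    rw [transpose_mul, Matrix.mul_assoc, ← Matrix.mul_assoc Sᵀ, hS, Matrix.mul_assoc,
      Matrix.mul_assoc, hU, Matrix.mul_one, ← Matrix.mul_assoc, hU, Matrix.one_mul]
  have herr : ∀ V : Matrix (Fin N) (Fin r) ℝ, Vᵀ * V = 1 →
      ∑ i, ∑ j, (S - V * Vᵀ * S) i j ^ 2 = ∑ j, σ j ^ 2 - ∑ i, ∑ j, (Vᵀ * S) i j ^ 2 := by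
    intro V hV
    rw [sum_sq_sub_mul_transpose_mul (by rw [Matrix.mul_assoc, hV, Matrix.mul_one]),
      ← sum_sq_mul_of_mul_transpose_eq_one hUU S, sum_sq_eq_trace_transpose_mul, hSU,
      trace_diagonal]
  have hsplit : ∑ j, σ j ^ 2 = ∑ j ∈ univ.filter (fun j : Fin K => (j : ℕ) < r), σ j ^ 2 +
      ∑ j ∈ univ.filter (fun j : Fin K => r ≤ (j : ℕ)), σ j ^ 2 := by
    simp only [← not_lt, sum_filter_add_sum_filter_not]
  refine ⟨fun V hV => ?_, fun V hV hV_eig => ?_⟩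
  · have h := sum_sq_transpose_mul_le_sum_filter_val_lt hrK hσ_nonneg hσ_anti hSU hV
    rw [← Matrix.mul_assoc, sum_sq_mul_of_mul_transpose_eq_one hUU] at h
    linarith [herr V hV]
  · have h := sum_sq_transpose_mul_eq_sum_of_eigenvectors hV hV_eig
    rw [Fin.sum_castLE_eq_sum_filter_val_lt hrK (fun j => σ j ^ 2)] at h
    linarith [herr V hV]

/-- POD optimality (Schmidt–Eckart–Young for the Frobenius norm with
orthonormal projections): for any `V` with orthonormal columns, the squared
Frobenius projection error `‖S - V Vᵀ S‖_F²` is at least the sum of the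
squares of the `K - r` smallest singular values of `S`, and the bound is
attained when the columns of `V` are left singular vectors of `S` for the `r`
largest singular values. -/
theorem pod_optimality
    (N K r : ℕ) (hrK : r ≤ K) (hKN : K ≤ N)
    (S : Matrix (Fin N) (Fin K) ℝ)
    (σ : Fin K → ℝ)
    (hσ_nonneg : ∀ j, 0 ≤ σ j)
    (hσ_anti : Antitone σ)
    (hσ_sing : ∃ U : Matrix (Fin K) (Fin K) ℝ, Uᵀ * U = 1 ∧
      Sᵀ * S = U * diagonal (fun j => σ j ^ 2) * Uᵀ) :
    (∀ V : Matrix (Fin N) (Fin r) ℝ, Vᵀ * V = 1 →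
      (∑ j ∈ univ.filter (fun j : Fin K => r ≤ (j : ℕ)), σ j ^ 2) ≤
        ∑ i, ∑ j, ((S - V * Vᵀ * S) i j) ^ 2) ∧
    (∀ V : Matrix (Fin N) (Fin r) ℝ, Vᵀ * V = 1 →
      (∀ i : Fin r, (S * Sᵀ).mulVec (fun k => V k i) =
        σ (Fin.castLE hrK i) ^ 2 • (fun k => V k i)) →
      ∑ i, ∑ j, ((S - V * Vᵀ * S) i j) ^ 2 =
        ∑ j ∈ univ.filter (fun j : Fin K => r ≤ (j : ℕ)), σ j ^ 2) :=
  pod_optimality_general N K r hrK S σ hσ_nonneg hσ_anti hσ_sing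
end

section
/- Semi-discrete buoyancy conservation: Let N ∈ ℕ and let D_x, D_y ∈ Matrix (Fin N) (Fin N) ℝ be skew-symmetric. Let h, s, u, v : ℝ → ℝᴺ with h and s differentiable, and suppose for all t: h'(t) = −( D_x.mulVec (h(t) ∘ u(t)) + D_y.mulVec (h(t) ∘ v(t)) ) and s'(t) = −( u(t) ∘ (D_x.mulVec (s(t))) + v(t) ∘ (D_y.mulVec (s(t))) ), where ∘ is the entrywise product. Then the discrete total buoyancy Σ_i h_i(t)·s_i(t) is constant in t. -/
/-!
The pairing `∑ᵢ hᵢ sᵢ` is the dot product `h ⬝ᵥ s`, whose time derivative is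
`h' ⬝ᵥ s + h ⬝ᵥ s'`. Moving the Hadamard factor `u` across the dot product, each direction
contributes `(D (h ∘ u)) ⬝ᵥ s + (h ∘ u) ⬝ᵥ (D s)`, which vanishes because `D` is skew-symmetric.
-/

open Matrix

namespace Matrix

variable {n R : Type*} [Fintype n] [CommRing R]

theorem mulVec_dotProduct_add_dotProduct_mulVec_eq_zero {D : Matrix n n R}
    (hD : Dᵀ = -D) (w z : n → R) : (D *ᵥ w) ⬝ᵥ z + w ⬝ᵥ (D *ᵥ z) = 0 := by
  rw [← vecMul_transpose, ← dotProduct_mulVec, hD, neg_mulVec, dotProduct_neg, neg_add_cancel]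

theorem mul_dotProduct (h u w : n → R) : (h * u) ⬝ᵥ w = h ⬝ᵥ (u * w) := by
  simp only [dotProduct, Pi.mul_apply, mul_assoc]

theorem mulVec_mul_dotProduct_add_dotProduct_mul_mulVec_eq_zero {D : Matrix n n R}
    (hD : Dᵀ = -D) (h s u : n → R) :
    (D *ᵥ (h * u)) ⬝ᵥ s + h ⬝ᵥ (u * D *ᵥ s) = 0 := by
  rw [← mul_dotProduct, mulVec_dotProduct_add_dotProduct_mulVec_eq_zero hD]

end Matrix

theorem HasDerivAt.dotProduct {n : Type*} [Fintype n] {f g : ℝ → n → ℝ} {f' g' : n → ℝ} {t : ℝ}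
    (hf : HasDerivAt f f' t) (hg : HasDerivAt g g' t) :
    HasDerivAt (fun t ↦ f t ⬝ᵥ g t) (f' ⬝ᵥ g t + f t ⬝ᵥ g') t := by
  have hfi := hasDerivAt_pi.mp hf
  have hgi := hasDerivAt_pi.mp hg
  unfold _root_.dotProduct
  rw [← Finset.sum_add_distrib]
  exact HasDerivAt.fun_sum fun i _ ↦ (hfi i).fun_mul (hgi i)

/-- Semi-discrete buoyancy conservation: if `D_x, D_y` are skew-symmetric,
`h' = -(D_x (h ∘ u) + D_y (h ∘ v))` and `s' = -(u ∘ (D_x s) + v ∘ (D_y s))`,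
then the discrete total buoyancy `∑ᵢ hᵢ sᵢ` is constant in time. -/
theorem semidiscrete_buoyancy_conservation
    (N : ℕ)
    (Dx Dy : Matrix (Fin N) (Fin N) ℝ)
    (hDx : Dxᵀ = -Dx) (hDy : Dyᵀ = -Dy)
    (h s u v : ℝ → Fin N → ℝ)
    (hh : ∀ t : ℝ, HasDerivAt h
      (-(Dx.mulVec (h t * u t) + Dy.mulVec (h t * v t))) t)
    (hs : ∀ t : ℝ, HasDerivAt s
      (-(u t * Dx.mulVec (s t) + v t * Dy.mulVec (s t))) t) :
    ∀ t : ℝ, ∑ i, h t i * s t i = ∑ i, h 0 i * s 0 i := by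
  have hB : ∀ t, HasDerivAt (fun t ↦ h t ⬝ᵥ s t) 0 t := by
    intro t
    convert (hh t).dotProduct (hs t) using 1
    rw [neg_dotProduct, dotProduct_neg, add_dotProduct, dotProduct_add, ← neg_add,
      add_add_add_comm, mulVec_mul_dotProduct_add_dotProduct_mul_mulVec_eq_zero hDx,
      mulVec_mul_dotProduct_add_dotProduct_mul_mulVec_eq_zero hDy, add_zero, neg_zero]
  exact fun t ↦ is_const_of_deriv_eq_zero (fun t ↦ (hB t).differentiableAt)
    (fun t ↦ (hB t).deriv) t 0
end
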